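/- Let W ∈ C²(ℝ^m, ℝ) and u ∈ C³(ℝⁿ, ℝ^m) solve Δu = ∇W(u). Fix constants κ, μ, R > 0 and define P(x) = (1/2)|∇u(x)|² + ((κ+μ)/2)(|u(x)|² − R²). If D²W(u(x))(ξ,ξ) ≥ −μ|ξ|² for all ξ ∈ ℝ^m at every x, then ΔP(x) ≥ B(x) + κ|∇u(x)|² + (κ+μ)⟨u(x), ∇W(u(x))⟩, where B(x) = Σ_{i,j} |u_{x_i x_j}(x)|² ≥ 0. -/

import Mathlib

/-!
For `g` of class `C²` and any finite family of directions `eᵢ`,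
`Σᵢ D²(½‖g‖²)(eᵢ, eᵢ) = Σᵢ ‖Dg eᵢ‖² + ⟪g, Σᵢ D²g(eᵢ, eᵢ)⟫`.
Apply this to `g = ∂ⱼu`: since `u` is `C³`, third derivatives are symmetric, so the Laplacian of
`∂ⱼu` is `∂ⱼ` of the Laplacian of `u`, which by the equation is `∂ⱼ(∇W ∘ u) = D∇W(u) ∂ⱼu`; pairing
with `∂ⱼu` gives `D²W(u)(∂ⱼu, ∂ⱼu)` (Bochner's formula). Applied to `g = u` it gives
`|∇u|² + ⟪u, ∇W(u)⟫`. Hence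
`ΔP = B + Σⱼ D²W(u)(∂ⱼu, ∂ⱼu) + (κ + μ)(|∇u|² + ⟪u, ∇W(u)⟫)`, and the lower bound `-μ` on the
Hessian of `W` leaves at least `κ|∇u|²` of the gradient term.
-/

open scoped RealInnerProductSpace

/-- The `i`-th standard basis vector of `ℝⁿ`. -/
noncomputable def en (n : ℕ) (i : Fin n) : EuclideanSpace ℝ (Fin n) :=
  EuclideanSpace.single i (1 : ℝ)

section SecondDerivative

variable {E F : Type*} [NormedAddCommGroup E] [NormedSpace ℝ E]
  [NormedAddCommGroup F] [NormedSpace ℝ F] {f : E → F}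

theorem contDiff_fderiv_apply {n : ℕ} (hf : ContDiff ℝ (n + 1) f) (v : E) :
    ContDiff ℝ n fun y => fderiv ℝ f y v :=
  (ContinuousLinearMap.apply ℝ F v).contDiff.comp (hf.fderiv_right le_rfl)

theorem fderiv_fderiv_apply_eq_iteratedFDeriv (hf : ContDiff ℝ 2 f) (x v w : E) :
    fderiv ℝ (fun y => fderiv ℝ f y v) x w = iteratedFDeriv ℝ 2 f x ![w, v] := by
  have hd : DifferentiableAt ℝ (fderiv ℝ f) x :=
    (hf.fderiv_right (m := 1) le_rfl).differentiable one_ne_zero x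
  rw [iteratedFDeriv_two_apply, fderiv_clm_apply hd (differentiableAt_const v)]
  simp

theorem ContDiff.iteratedFDeriv_two_comm (hf : ContDiff ℝ 2 f) (x v w : E) :
    iteratedFDeriv ℝ 2 f x ![v, w] = iteratedFDeriv ℝ 2 f x ![w, v] :=
  IsSymmSndFDerivAt.iteratedFDeriv_cons
    (hf := hf.contDiffAt.isSymmSndFDerivAt (by simp [minSmoothness_of_isRCLikeNormedField]))

theorem fderiv_fderiv_apply_comm (hf : ContDiff ℝ 2 f) (v w : E) :
    (fun y => fderiv ℝ (fun z => fderiv ℝ f z v) y w) =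
      fun y => fderiv ℝ (fun z => fderiv ℝ f z w) y v := by
  ext1 y
  rw [fderiv_fderiv_apply_eq_iteratedFDeriv hf, fderiv_fderiv_apply_eq_iteratedFDeriv hf,
    hf.iteratedFDeriv_two_comm]

theorem iteratedFDeriv_two_fderiv_apply (hf : ContDiff ℝ 3 f) (x a b w : E) :
    iteratedFDeriv ℝ 2 (fun y => fderiv ℝ f y w) x ![a, b] =
      fderiv ℝ (fun y => iteratedFDeriv ℝ 2 f y ![a, b]) x w := by
  have hf2 : ContDiff ℝ 2 f := hf.of_le (by norm_num)
  have hb : ContDiff ℝ 2 fun y => fderiv ℝ f y b := contDiff_fderiv_apply hf b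
  rw [← fderiv_fderiv_apply_eq_iteratedFDeriv (contDiff_fderiv_apply hf w),
    fderiv_fderiv_apply_comm hf2, fderiv_fderiv_apply_eq_iteratedFDeriv hb,
    hb.iteratedFDeriv_two_comm, ← fderiv_fderiv_apply_eq_iteratedFDeriv hb]
  simp_rw [fderiv_fderiv_apply_eq_iteratedFDeriv hf2]

theorem sum_iteratedFDeriv_two_fderiv_apply {ι : Type*} [Fintype ι] (e : ι → E)
    (hf : ContDiff ℝ 3 f) (x w : E) :
    ∑ i, iteratedFDeriv ℝ 2 (fun y => fderiv ℝ f y w) x ![e i, e i] =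
      fderiv ℝ (fun y => ∑ i, iteratedFDeriv ℝ 2 f y ![e i, e i]) x w := by
  have hd : Differentiable ℝ (iteratedFDeriv ℝ 2 f) :=
    hf.differentiable_iteratedFDeriv (by norm_num)
  rw [fderiv_fun_sum fun i _ => by fun_prop, sum_apply]
  simp only [iteratedFDeriv_two_fderiv_apply hf]

end SecondDerivative

section InnerProductSpace

variable {E G : Type*} [NormedAddCommGroup E] [NormedSpace ℝ E]
  [NormedAddCommGroup G] [InnerProductSpace ℝ G]

theorem fderiv_norm_sq_comp_apply {g : E → G} {x : E} (hg : DifferentiableAt ℝ g x) (v : E) :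
    fderiv ℝ (fun y => ‖g y‖ ^ 2) x v = 2 * ⟪g x, fderiv ℝ g x v⟫ := by
  rw [hg.hasFDerivAt.norm_sq.fderiv]
  simp

theorem iteratedFDeriv_two_norm_sq_comp_apply {g : E → G} (hg : ContDiff ℝ 2 g) (x v w : E) :
    iteratedFDeriv ℝ 2 (fun y => ‖g y‖ ^ 2) x ![v, w] =
      2 * (⟪fderiv ℝ g x v, fderiv ℝ g x w⟫ + ⟪g x, iteratedFDeriv ℝ 2 g x ![v, w]⟫) := by
  have hg1 : Differentiable ℝ g := hg.differentiable two_ne_zero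
  have hgw : Differentiable ℝ fun y => fderiv ℝ g y w :=
    (contDiff_fderiv_apply (n := 1) hg w).differentiable one_ne_zero
  rw [← fderiv_fderiv_apply_eq_iteratedFDeriv (hg.norm_sq ℝ),
    ← fderiv_fderiv_apply_eq_iteratedFDeriv hg]
  simp_rw [fderiv_norm_sq_comp_apply (hg1 _)]
  rw [fderiv_const_mul ((hg1 x).inner ℝ (hgw x)), smul_apply,
    fderiv_inner_apply ℝ (hg1 x) (hgw x), smul_eq_mul, add_comm]

variable {ι : Type*} [Fintype ι] (e : ι → E)

theorem sum_iteratedFDeriv_two_norm_sq_comp {g : E → G} (hg : ContDiff ℝ 2 g) (x : E) :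
    ∑ i, iteratedFDeriv ℝ 2 (fun y => ‖g y‖ ^ 2) x ![e i, e i] =
      2 * (∑ i, ‖fderiv ℝ g x (e i)‖ ^ 2 + ⟪g x, ∑ i, iteratedFDeriv ℝ 2 g x ![e i, e i]⟫) := by
  simp only [iteratedFDeriv_two_norm_sq_comp_apply hg, real_inner_self_eq_norm_sq, inner_sum,
    ← Finset.mul_sum, Finset.sum_add_distrib]

end InnerProductSpace

section Gradient

variable {G : Type*} [NormedAddCommGroup G] [InnerProductSpace ℝ G] [CompleteSpace G]

theorem ContDiff.gradient {n : ℕ} {W : G → ℝ} (hW : ContDiff ℝ (n + 1) W) :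
    ContDiff ℝ n (gradient W) :=
  (InnerProductSpace.toDual ℝ G).symm.contDiff.comp (hW.fderiv_right le_rfl)

theorem inner_fderiv_gradient_apply (W : G → ℝ) (z ξ η : G) :
    ⟪η, fderiv ℝ (gradient W) z ξ⟫ = iteratedFDeriv ℝ 2 W z ![ξ, η] := by
  have h : gradient W = (InnerProductSpace.toDual ℝ G).symm ∘ fderiv ℝ W := rfl
  rw [iteratedFDeriv_two_apply, h, LinearIsometryEquiv.comp_fderiv, real_inner_comm]
  simpa using InnerProductSpace.toDual_symm_apply

variable {E : Type*} [NormedAddCommGroup E] [NormedSpace ℝ E] {ι : Type*} [Fintype ι]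
  (e : ι → E) {u : E → G} {W : G → ℝ}

theorem sum_iteratedFDeriv_two_fderiv_apply_of_eq_gradient (hu : ContDiff ℝ 3 u)
    (hW : ContDiff ℝ 2 W) (hsol : ∀ y, ∑ i, iteratedFDeriv ℝ 2 u y ![e i, e i] = gradient W (u y))
    (x w : E) :
    ∑ i, iteratedFDeriv ℝ 2 (fun y => fderiv ℝ u y w) x ![e i, e i] =
      fderiv ℝ (gradient W) (u x) (fderiv ℝ u x w) := by
  have hWd : Differentiable ℝ (gradient W) := (hW.gradient (n := 1)).differentiable one_ne_zero
  have hud : Differentiable ℝ u := hu.differentiable (by norm_num)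
  rw [sum_iteratedFDeriv_two_fderiv_apply e hu, funext hsol,
    fderiv_fun_comp x (hWd (u x)) (hud x), ContinuousLinearMap.comp_apply]

theorem sum_iteratedFDeriv_two_sum_norm_sq_fderiv_of_eq_gradient (hu : ContDiff ℝ 3 u)
    (hW : ContDiff ℝ 2 W) (hsol : ∀ y, ∑ i, iteratedFDeriv ℝ 2 u y ![e i, e i] = gradient W (u y))
    (x : E) :
    ∑ i, iteratedFDeriv ℝ 2 (fun y => ∑ j, ‖fderiv ℝ u y (e j)‖ ^ 2) x ![e i, e i] =
      2 * (∑ i, ∑ j, ‖iteratedFDeriv ℝ 2 u x ![e i, e j]‖ ^ 2 +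
        ∑ j, iteratedFDeriv ℝ 2 W (u x) ![fderiv ℝ u x (e j), fderiv ℝ u x (e j)]) := by
  have hu2 : ContDiff ℝ 2 u := hu.of_le (by norm_num)
  have huj : ∀ j, ContDiff ℝ 2 fun y => fderiv ℝ u y (e j) := fun j =>
    contDiff_fderiv_apply hu (e j)
  simp only [iteratedFDeriv_fun_sum_apply fun j _ => ((huj j).norm_sq ℝ).contDiffAt, sum_apply]
  rw [Finset.sum_comm]
  simp only [sum_iteratedFDeriv_two_norm_sq_comp e (huj _),
    sum_iteratedFDeriv_two_fderiv_apply_of_eq_gradient e hu hW hsol,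
    fderiv_fderiv_apply_eq_iteratedFDeriv hu2, inner_fderiv_gradient_apply,
    ← Finset.mul_sum, Finset.sum_add_distrib]
  rw [Finset.sum_comm]

theorem P_function_laplacian_eq (hu : ContDiff ℝ 3 u) (hW : ContDiff ℝ 2 W)
    (hsol : ∀ y, ∑ i, iteratedFDeriv ℝ 2 u y ![e i, e i] = gradient W (u y)) (c R : ℝ) (x : E) :
    ∑ i, iteratedFDeriv ℝ 2 (fun y => (1 / 2) * ∑ j, ‖fderiv ℝ u y (e j)‖ ^ 2 +
        (c / 2) * (‖u y‖ ^ 2 - R ^ 2)) x ![e i, e i] =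
      ∑ i, ∑ j, ‖iteratedFDeriv ℝ 2 u x ![e i, e j]‖ ^ 2 +
        ∑ j, iteratedFDeriv ℝ 2 W (u x) ![fderiv ℝ u x (e j), fderiv ℝ u x (e j)] +
        c * (∑ j, ‖fderiv ℝ u x (e j)‖ ^ 2 + ⟪u x, gradient W (u x)⟫) := by
  have hu2 : ContDiff ℝ 2 u := hu.of_le (by norm_num)
  set S := fun y => ∑ j, ‖fderiv ℝ u y (e j)‖ ^ 2
  set N := fun y => ‖u y‖ ^ 2 - R ^ 2
  have hS : ContDiff ℝ 2 S := ContDiff.sum fun j _ => (contDiff_fderiv_apply hu (e j)).norm_sq ℝ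
  have hN : ContDiff ℝ 2 N := (hu2.norm_sq ℝ).sub contDiff_const
  have hsplit : ∀ v, iteratedFDeriv ℝ 2 (fun y => (1 / 2 : ℝ) • S y + (c / 2) • N y) x ![v, v] =
      (1 / 2) * iteratedFDeriv ℝ 2 S x ![v, v] +
        (c / 2) * iteratedFDeriv ℝ 2 (fun y => ‖u y‖ ^ 2) x ![v, v] := by
    intro v
    rw [fun_iteratedFDeriv_add_apply (hS.const_smul _).contDiffAt (hN.const_smul _).contDiffAt,
      iteratedFDeriv_const_smul_apply' hS.contDiffAt,
      iteratedFDeriv_const_smul_apply' hN.contDiffAt,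
      fun_iteratedFDeriv_sub_apply (hu2.norm_sq ℝ).contDiffAt contDiff_const.contDiffAt,
      iteratedFDeriv_const_of_ne two_ne_zero]
    simp
  change ∑ i, iteratedFDeriv ℝ 2 (fun y => (1 / 2 : ℝ) • S y + (c / 2) • N y) x ![e i, e i] = _
  simp only [hsplit, Finset.sum_add_distrib, ← Finset.mul_sum, S,
    sum_iteratedFDeriv_two_sum_norm_sq_fderiv_of_eq_gradient e hu hW hsol,
    sum_iteratedFDeriv_two_norm_sq_comp e hu2, hsol x]
  ring

end Gradient

theorem P_function_inequality_general (n m : ℕ)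
    (W : EuclideanSpace ℝ (Fin m) → ℝ) (hW : ContDiff ℝ 2 W)
    (u : EuclideanSpace ℝ (Fin n) → EuclideanSpace ℝ (Fin m)) (hu : ContDiff ℝ 3 u)
    (hsol : ∀ x, ∑ i : Fin n, iteratedFDeriv ℝ 2 u x ![en n i, en n i] = gradient W (u x))
    (κ μ R : ℝ)
    (hhess : ∀ x, ∀ ξ : EuclideanSpace ℝ (Fin m),
      -μ * ‖ξ‖ ^ 2 ≤ iteratedFDeriv ℝ 2 W (u x) ![ξ, ξ]) :
    ∀ x : EuclideanSpace ℝ (Fin n),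
      ∑ i : Fin n, iteratedFDeriv ℝ 2
          (fun y => (1 / 2) * ∑ j : Fin n, ‖fderiv ℝ u y (en n j)‖ ^ 2 +
            ((κ + μ) / 2) * (‖u y‖ ^ 2 - R ^ 2)) x ![en n i, en n i] ≥
        (∑ i : Fin n, ∑ j : Fin n, ‖iteratedFDeriv ℝ 2 u x ![en n i, en n j]‖ ^ 2) +
          κ * ∑ j : Fin n, ‖fderiv ℝ u x (en n j)‖ ^ 2 +
          (κ + μ) * ⟪u x, gradient W (u x)⟫ := by
  intro x
  have hhess_sum : -μ * ∑ j, ‖fderiv ℝ u x (en n j)‖ ^ 2 ≤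
      ∑ j, iteratedFDeriv ℝ 2 W (u x) ![fderiv ℝ u x (en n j), fderiv ℝ u x (en n j)] := by
    rw [Finset.mul_sum]
    exact Finset.sum_le_sum fun j _ => hhess x _
  rw [ge_iff_le, P_function_laplacian_eq (en n) hu hW hsol]
  linarith

/-- Let `W ∈ C²(ℝ^m, ℝ)` and `u ∈ C³(ℝⁿ, ℝ^m)` solve `Δu = ∇W(u)`. For
`κ, μ, R > 0` define `P(x) = (1/2)|∇u(x)|² + ((κ+μ)/2)(|u(x)|² − R²)`. If
`D²W(u(x))(ξ,ξ) ≥ −μ|ξ|²` for all `ξ`, then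
`ΔP(x) ≥ B(x) + κ|∇u(x)|² + (κ+μ)⟨u(x), ∇W(u(x))⟩`, where
`B(x) = Σ_{i,j}|u_{x_i x_j}(x)|² ≥ 0`. -/
theorem P_function_inequality (n m : ℕ)
    (W : EuclideanSpace ℝ (Fin m) → ℝ) (hW : ContDiff ℝ 2 W)
    (u : EuclideanSpace ℝ (Fin n) → EuclideanSpace ℝ (Fin m)) (hu : ContDiff ℝ 3 u)
    (hsol : ∀ x, ∑ i : Fin n, iteratedFDeriv ℝ 2 u x ![en n i, en n i] = gradient W (u x))
    (κ μ R : ℝ) (hκ : 0 < κ) (hμ : 0 < μ) (hR : 0 < R)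
    (hhess : ∀ x, ∀ ξ : EuclideanSpace ℝ (Fin m),
      -μ * ‖ξ‖ ^ 2 ≤ iteratedFDeriv ℝ 2 W (u x) ![ξ, ξ]) :
    ∀ x : EuclideanSpace ℝ (Fin n),
      ∑ i : Fin n, iteratedFDeriv ℝ 2
          (fun y => (1 / 2) * ∑ j : Fin n, ‖fderiv ℝ u y (en n j)‖ ^ 2 +
            ((κ + μ) / 2) * (‖u y‖ ^ 2 - R ^ 2)) x ![en n i, en n i] ≥
        (∑ i : Fin n, ∑ j : Fin n, ‖iteratedFDeriv ℝ 2 u x ![en n i, en n j]‖ ^ 2) +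
          κ * ∑ j : Fin n, ‖fderiv ℝ u x (en n j)‖ ^ 2 +
          (κ + μ) * ⟪u x, gradient W (u x)⟫ :=
  P_function_inequality_general n m W hW u hu hsol κ μ R hhess
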